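/- arXiv:2503.20656 — 3 statements merged into one kernel-verified Lean document; each statement's English description precedes it below -/
import Mathlib

section
/- Let 1 ≤ k ≤ n and κ ∈ Γ_k with coordinates ordered κ_1 ≥ κ_2 ≥ ⋯ ≥ κ_n. Then σ_{k-1}(κ|1) · κ_1 ≥ (k/n) · σ_k(κ). -/
open Finset


/-- The `k`-th elementary symmetric polynomial of `κ ∈ ℝⁿ`. -/
noncomputable def esymm (n k : ℕ) (κ : Fin n → ℝ) : ℝ :=
  ∑ s ∈ Finset.powersetCard k Finset.univ, ∏ i ∈ s, κ i

lemma esymm_zero' (n : ℕ) (κ : Fin n → ℝ) : esymm n 0 κ = 1 := by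
  simp [esymm]

lemma esymm_of_gt {n k : ℕ} (h : n < k) (κ : Fin n → ℝ) : esymm n k κ = 0 := by
  rw [esymm, Finset.powersetCard_eq_empty.2 (by simpa using h), Finset.sum_empty]

lemma esymm_one' {n : ℕ} (κ : Fin n → ℝ) : esymm n 1 κ = ∑ i, κ i := by
  simp [esymm, Finset.powersetCard_one, Finset.sum_map]

lemma esymm_top {n : ℕ} (κ : Fin n → ℝ) : esymm n n κ = ∏ i, κ i := by
  have h : (Finset.univ : Finset (Fin n)).card = n := by simp
  rw [esymm]
  rw [show (Finset.powersetCard n (Finset.univ : Finset (Fin n)))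
      = Finset.powersetCard (Finset.univ : Finset (Fin n)).card Finset.univ by rw [h],
    Finset.powersetCard_self, Finset.sum_singleton]

lemma esymm_update (n k : ℕ) (κ : Fin n → ℝ) (i : Fin n) :
    esymm n k (Function.update κ i 0)
      = ∑ s ∈ Finset.powersetCard k Finset.univ, if i ∈ s then 0 else ∏ x ∈ s, κ x := by
  unfold esymm
  refine Finset.sum_congr rfl fun s _ => ?_
  by_cases hi : i ∈ s
  · rw [if_pos hi]
    exact Finset.prod_eq_zero hi (by simp)
  · rw [if_neg hi]
    refine Finset.prod_congr rfl fun x hx => Function.update_of_ne ?_ _ _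
    intro h; exact hi (h ▸ hx)

lemma esymm_update_filter (n k : ℕ) (κ : Fin n → ℝ) (i : Fin n) :
    esymm n k (Function.update κ i 0)
      = ∑ s ∈ (Finset.powersetCard k Finset.univ).filter (i ∉ ·), ∏ x ∈ s, κ x := by
  rw [esymm_update, Finset.sum_filter]
  exact Finset.sum_congr rfl fun s _ => by by_cases hi : i ∈ s <;> simp [hi]

/-- E1 -/
lemma esymm_split (n j : ℕ) (κ : Fin n → ℝ) (i : Fin n) :
    esymm n (j+1) κ
      = esymm n (j+1) (Function.update κ i 0) + κ i * esymm n j (Function.update κ i 0) := by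
  rw [esymm_update_filter, esymm_update_filter, esymm,
    ← Finset.sum_filter_add_sum_filter_not (Finset.powersetCard (j+1) Finset.univ)
    (fun s => i ∉ s)]
  congr 1
  rw [Finset.mul_sum]
  refine Finset.sum_nbij' (fun s => s.erase i) (fun t => insert i t) ?_ ?_ ?_ ?_ ?_
  · intro s hs
    simp only [Finset.mem_filter, Finset.mem_powersetCard, not_not] at hs ⊢
    refine ⟨⟨Finset.subset_univ _, ?_⟩, Finset.notMem_erase i s⟩
    rw [Finset.card_erase_of_mem hs.2, hs.1.2]; rfl
  · intro t ht
    simp only [Finset.mem_filter, Finset.mem_powersetCard] at ht ⊢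
    refine ⟨⟨Finset.subset_univ _, ?_⟩, not_not.2 (Finset.mem_insert_self i t)⟩
    rw [Finset.card_insert_of_notMem ht.2, ht.1.2]
  · intro s hs
    simp only [Finset.mem_filter, not_not] at hs
    exact Finset.insert_erase hs.2
  · intro t ht
    simp only [Finset.mem_filter] at ht
    exact Finset.erase_insert ht.2
  · intro s hs
    simp only [Finset.mem_filter, not_not] at hs
    rw [← Finset.prod_erase_mul s κ hs.2]
    ring

/-- E3 -/
lemma esymm_sum_update (n k : ℕ) (κ : Fin n → ℝ) :
    ∑ i, esymm n k (Function.update κ i 0) = (n - k : ℝ) * esymm n k κ := by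
  calc ∑ i, esymm n k (Function.update κ i 0)
      = ∑ i, ∑ s ∈ Finset.powersetCard k Finset.univ,
          if i ∈ s then 0 else ∏ x ∈ s, κ x := by
        exact Finset.sum_congr rfl fun i _ => esymm_update n k κ i
    _ = ∑ s ∈ Finset.powersetCard k Finset.univ, ∑ i,
          if i ∈ s then 0 else ∏ x ∈ s, κ x := Finset.sum_comm
    _ = ∑ s ∈ Finset.powersetCard k Finset.univ, (n - k : ℝ) * ∏ x ∈ s, κ x := by
        refine Finset.sum_congr rfl fun s hs => ?_
        rw [Finset.mem_powersetCard] at hs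
        rw [Finset.sum_ite, Finset.sum_const, Finset.sum_const, smul_zero, zero_add,
          Finset.filter_not, Finset.filter_mem_eq_inter, Finset.univ_inter, nsmul_eq_mul]
        have : #(Finset.univ \ s) = n - k := by
          rw [Finset.card_sdiff_of_subset (Finset.subset_univ s), hs.2, Finset.card_univ, Fintype.card_fin]
        rw [this, Nat.cast_sub (by rw [← hs.2]; exact le_trans (Finset.card_le_card hs.1) (by simp))]
    _ = (n - k : ℝ) * esymm n k κ := by rw [← Finset.mul_sum]; rfl

/-- E2 -/
lemma esymm_weighted_sum (n k : ℕ) (κ : Fin n → ℝ) :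
    ∑ i, κ i * esymm n k (Function.update κ i 0) = (k+1 : ℝ) * esymm n (k+1) κ := by
  have h : ∀ i : Fin n, κ i * esymm n k (Function.update κ i 0)
      = esymm n (k+1) κ - esymm n (k+1) (Function.update κ i 0) := by
    intro i
    have := esymm_split n k κ i
    linarith
  rw [Finset.sum_congr rfl fun i _ => h i, Finset.sum_sub_distrib, Finset.sum_const,
    esymm_sum_update, Finset.card_univ, Fintype.card_fin, nsmul_eq_mul]
  push_cast
  ring

lemma esymm_two' (n : ℕ) (κ : Fin n → ℝ) :
    2 * esymm n 2 κ = (∑ i, κ i)^2 - ∑ i, (κ i)^2 := by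
  have h := esymm_weighted_sum n 1 κ
  have h2 : ∀ i : Fin n, esymm n 1 (Function.update κ i 0) = (∑ x, κ x) - κ i := by
    intro i
    rw [esymm_one']
    rw [Finset.sum_update_of_mem (Finset.mem_univ i), zero_add,
      ← Finset.add_sum_erase _ κ (Finset.mem_univ i), Finset.sdiff_singleton_eq_erase]
    ring
  rw [Finset.sum_congr rfl fun i _ => by rw [h2 i]] at h
  have : ∑ i, κ i * ((∑ x, κ x) - κ i) = (∑ i, κ i)^2 - ∑ i, (κ i)^2 := by
    rw [Finset.sum_congr rfl fun i (_ : i ∈ Finset.univ) => (mul_sub (κ i) _ _),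
      Finset.sum_sub_distrib, ← Finset.sum_mul, sq]
    congr 1
    exact Finset.sum_congr rfl fun i _ => (sq (κ i)).symm ▸ rfl
  rw [this] at h
  norm_num at h ⊢
  linarith

lemma esymm_compl {d r : ℕ} (hr : r ≤ d) (f : Fin d → ℝ) (hf : ∀ i, f i ≠ 0) :
    esymm d (d - r) f = (∏ i, f i) * esymm d r (fun i => (f i)⁻¹) := by
  unfold esymm
  rw [Finset.mul_sum]
  refine Finset.sum_nbij' (fun s => sᶜ) (fun t => tᶜ) ?_ ?_ ?_ ?_ ?_
  · intro s hs
    simp only [Finset.mem_powersetCard] at hs ⊢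
    refine ⟨Finset.subset_univ _, ?_⟩
    rw [Finset.card_compl, hs.2, Fintype.card_fin, Nat.sub_sub_self hr]
  · intro t ht
    simp only [Finset.mem_powersetCard] at ht ⊢
    refine ⟨Finset.subset_univ _, ?_⟩
    rw [Finset.card_compl, ht.2, Fintype.card_fin]
  · intro s _; exact compl_compl s
  · intro t _; exact compl_compl t
  · intro s _
    have h1 : (∏ i ∈ s, f i) * ∏ i ∈ sᶜ, f i = ∏ i, f i := Finset.prod_mul_prod_compl s f
    have h2 : (∏ i ∈ sᶜ, f i) ≠ 0 := Finset.prod_ne_zero_iff.2 fun i _ => hf i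
    have h3 : ∏ i ∈ sᶜ, (fun i => (f i)⁻¹) i = (∏ i ∈ sᶜ, f i)⁻¹ := by
      simp [Finset.prod_inv_distrib]
    rw [h3]
    field_simp
    linarith [h1]


lemma topNewton (e : ℕ) (f : Fin (e+2) → ℝ) :
    2*(e+2 : ℝ) * (esymm (e+2) (e+2) f * esymm (e+2) e f)
      ≤ (e+1 : ℝ) * esymm (e+2) (e+1) f^2 := by
  by_cases hz : ∀ i, f i ≠ 0
  · set g : Fin (e+2) → ℝ := fun i => (f i)⁻¹ with hg
    have h1 : esymm (e+2) (e+1) f = (∏ i, f i) * esymm (e+2) 1 g := by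
      have := esymm_compl (d := e+2) (r := 1) (by omega) f hz
      simpa using this
    have h2 : esymm (e+2) e f = (∏ i, f i) * esymm (e+2) 2 g := by
      have := esymm_compl (d := e+2) (r := 2) (by omega) f hz
      simpa using this
    have h3 : esymm (e+2) (e+2) f = ∏ i, f i := esymm_top f
    have hsq := esymm_two' (e+2) g
    have hcs : (∑ i, g i)^2 ≤ (e+2 : ℝ) * ∑ i, (g i)^2 := by
      have := sq_sum_le_card_mul_sum_sq (s := (Finset.univ : Finset (Fin (e+2)))) (f := g)
      simpa using this
    rw [h1, h2, h3, esymm_one']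
    have hP := sq_nonneg (∏ i, f i)
    have key : 2*(e+2 : ℝ)*esymm (e+2) 2 g ≤ (e+1 : ℝ)*(∑ i, g i)^2 := by nlinarith
    nlinarith [mul_le_mul_of_nonneg_left key hP]
  · push_neg at hz
    obtain ⟨i, hi⟩ := hz
    have h3 : esymm (e+2) (e+2) f = 0 := by
      rw [esymm_top]
      exact Finset.prod_eq_zero (Finset.mem_univ i) hi
    rw [h3]
    have := sq_nonneg (esymm (e+2) (e+1) f)
    nlinarith


lemma topNewton_multiset (e : ℕ) (t : Multiset ℝ) (hcard : Multiset.card t = e + 2) :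
    2*(e+2 : ℝ) * (t.esymm (e+2) * t.esymm e) ≤ (e+1 : ℝ) * t.esymm (e+1)^2 := by
  classical
  set l := t.toList with hl
  have hlen : l.length = e + 2 := by rw [hl, Multiset.length_toList, hcard]
  set f : Fin (e+2) → ℝ := fun i => l.get (Fin.cast hlen.symm i) with hf
  have hofn : List.ofFn f = l := by
    refine List.ext_getElem (by simp [hlen]) ?_
    intro i h1 h2
    rw [List.getElem_ofFn]
    rfl
  have hmap : Finset.univ.val.map f = t := by
    rw [Fin.univ_val_map, hofn, hl, Multiset.coe_toList]
  have hesymm : ∀ r, t.esymm r = esymm (e+2) r f := by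
    intro r
    rw [← hmap, Finset.esymm_map_val]
    rfl
  rw [hesymm, hesymm, hesymm]
  exact topNewton e f

lemma card_roots_le_iterate (m : ℕ) (p : Polynomial ℝ) :
    Multiset.card p.roots ≤ Multiset.card ((Polynomial.derivative)^[m] p).roots + m := by
  induction m generalizing p with
  | zero => simp
  | succ m ih =>
    have h := ih (Polynomial.derivative p)
    have h2 := p.card_roots_le_derivative
    rw [Function.iterate_succ_apply]
    omega

set_option maxHeartbeats 1000000 in
lemma newton_weak {n m : ℕ} (hmn : m + 2 ≤ n) (κ : Fin n → ℝ) :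
    esymm n m κ * esymm n (m+2) κ ≤ esymm n (m+1) κ^2 := by
  classical
  set s : Multiset ℝ := Finset.univ.val.map (fun i => -κ i) with hs
  have hcs : Multiset.card s = n := by simp [hs]
  set p : Polynomial ℝ := (s.map fun a => Polynomial.X - Polynomial.C a).prod with hp
  have hd : p.natDegree = n := by
    rw [hp, Polynomial.natDegree_multiset_prod_X_sub_C_eq_card, hcs]
  have hroots : p.roots = s := Polynomial.roots_multiset_prod_X_sub_C s
  have hcoeff : ∀ r, r ≤ n → p.coeff (n - r) = esymm n r κ := by
    intro r hr
    have h1 : n - r ≤ Multiset.card s := by rw [hcs]; omega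
    rw [hp, Multiset.prod_X_sub_C_coeff s h1, hcs, Nat.sub_sub_self hr]
    have h2 : s = (Finset.univ.val.map κ).map Neg.neg := by
      rw [hs, Multiset.map_map]; rfl
    rw [h2, Multiset.esymm_neg, Finset.esymm_map_val]
    have h3 : Finset.sum (Finset.powersetCard r Finset.univ) (fun t => t.prod κ) = esymm n r κ := rfl
    rw [h3, ← mul_assoc, ← pow_add, ← two_mul, pow_mul]
    norm_num
  set w : ℕ := n - (m + 2) with hw
  set q : Polynomial ℝ := (Polynomial.derivative)^[w] p with hq
  have hqdeg_le : q.natDegree ≤ m + 2 := by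
    have h := Polynomial.natDegree_iterate_derivative p w
    rw [← hq] at h
    omega
  have hqroots_ge : m + 2 ≤ Multiset.card q.roots := by
    have h1 := card_roots_le_iterate w p
    rw [← hq] at h1
    have h2 : Multiset.card p.roots = n := by rw [hroots, hcs]
    omega
  have hqcard2 : q.natDegree = m + 2 := by
    have := q.card_roots'
    omega
  have hqcard1 : Multiset.card q.roots = q.natDegree := by
    have := q.card_roots'
    omega
  -- coefficients of q via iterated derivative
  have hqc : ∀ i : ℕ, q.coeff i = ((i + w).descFactorial w : ℝ) * p.coeff (i + w) := by
    intro i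
    rw [hq, Polynomial.coeff_iterate_derivative, nsmul_eq_mul]
  have hw0 : p.coeff (0 + w) = esymm n (m+2) κ := by
    rw [zero_add, hw]; exact hcoeff (m+2) hmn
  have hw1 : p.coeff (1 + w) = esymm n (m+1) κ := by
    rw [show 1 + w = n - (m+1) by omega]; exact hcoeff (m+1) (by omega)
  have hw2 : p.coeff (2 + w) = esymm n m κ := by
    rw [show 2 + w = n - m by omega]; exact hcoeff m (by omega)
  -- Vieta for q
  have hvieta : ∀ i : ℕ, i ≤ m + 2 → q.coeff i
      = q.leadingCoeff * (-1) ^ (m + 2 - i) * q.roots.esymm (m + 2 - i) := by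
    intro i hi
    have := Polynomial.coeff_eq_esymm_roots_of_card (p := q) hqcard1 (k := i)
      (by rw [hqcard2]; exact hi)
    rwa [hqcard2] at this
  have htop := topNewton_multiset m q.roots (by rw [hqcard1, hqcard2])
  have h02 : q.coeff 0 * q.coeff 2
      = q.leadingCoeff^2 * (q.roots.esymm (m+2) * q.roots.esymm m) := by
    rw [hvieta 0 (by omega), hvieta 2 (by omega)]
    have hpow : ((-1 : ℝ)) ^ (m + 2 - 0) * (-1) ^ (m + 2 - 2) = 1 := by
      rw [Nat.sub_zero, show m + 2 - 2 = m from rfl, ← pow_add, show m + 2 + m = 2*(m+1) by ring,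
        pow_mul]
      norm_num
    calc q.leadingCoeff * (-1) ^ (m + 2 - 0) * Multiset.esymm q.roots (m + 2 - 0) *
          (q.leadingCoeff * (-1) ^ (m + 2 - 2) * Multiset.esymm q.roots (m + 2 - 2))
        = q.leadingCoeff^2 * (((-1 : ℝ)) ^ (m + 2 - 0) * (-1) ^ (m + 2 - 2)) *
          (Multiset.esymm q.roots (m+2) * Multiset.esymm q.roots m) := by
          rw [Nat.sub_zero, show m + 2 - 2 = m from rfl]; ring
      _ = q.leadingCoeff^2 * (q.roots.esymm (m+2) * q.roots.esymm m) := by rw [hpow]; ring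
  have h11 : q.coeff 1 ^ 2 = q.leadingCoeff^2 * q.roots.esymm (m+1)^2 := by
    rw [hvieta 1 (by omega)]
    have he : m + 2 - 1 = m + 1 := rfl
    rw [he, mul_pow, mul_pow, ← pow_mul]
    have h1 : ((-1:ℝ))^((m+1)*2) = 1 := by rw [mul_comm, pow_mul]; norm_num
    rw [h1]; ring
  have hkey : 2*(m+2 : ℝ) * (q.coeff 0 * q.coeff 2) ≤ (m+1 : ℝ) * q.coeff 1^2 := by
    rw [h02, h11]
    have hL := sq_nonneg q.leadingCoeff
    nlinarith [mul_le_mul_of_nonneg_left htop hL]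
  -- descFactorial values
  set A0 : ℝ := ((0 + w).descFactorial w : ℝ) with hA0d
  set A1 : ℝ := ((1 + w).descFactorial w : ℝ) with hA1d
  set A2 : ℝ := ((2 + w).descFactorial w : ℝ) with hA2d
  clear_value A0 A1 A2
  have hA0 : A0 = (w.factorial : ℝ) := by
    rw [hA0d, zero_add, Nat.descFactorial_self]
  have hA0pos : 0 < A0 := by rw [hA0]; exact_mod_cast w.factorial_pos
  have hA1 : A1 = (w+1 : ℝ) * A0 := by
    have h := Nat.succ_descFactorial w w
    have h2 : w + 1 - w = 1 := by omega
    rw [h2, one_mul, Nat.descFactorial_self] at h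
    rw [hA1d, hA0, show 1 + w = w + 1 by omega, h]
    push_cast; ring
  have hA2 : 2 * A2 = (w+2 : ℝ) * (w+1 : ℝ) * A0 := by
    have h := Nat.succ_descFactorial (w+1) w
    have h2 : w + 1 + 1 - w = 2 := by omega
    rw [h2] at h
    have h3 : (2:ℝ) * ((w + 1 + 1).descFactorial w : ℝ) = (w + 1 + 1 : ℝ) * ((w+1).descFactorial w : ℝ) := by
      exact_mod_cast congrArg (fun x : ℕ => (x : ℝ)) h
    have h4 : ((w+1).descFactorial w : ℝ) = A1 := by
      rw [hA1d]; norm_num [Nat.add_comm]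
    rw [hA2d, show (2:ℕ) + w = w + 1 + 1 by omega, h3, h4, hA1]
    push_cast; ring
  -- final assembly
  set S0 := esymm n m κ
  set S1 := esymm n (m+1) κ
  set S2 := esymm n (m+2) κ
  clear_value S0 S1 S2
  have e0 : q.coeff 0 = A0 * S2 := by rw [hqc 0, hw0, ← hA0d]
  have e1 : q.coeff 1 = A1 * S1 := by rw [hqc 1, hw1, ← hA1d]
  have e2 : q.coeff 2 = A2 * S0 := by rw [hqc 2, hw2, ← hA2d]
  rw [e0, e1, e2] at hkey
  by_cases hP : S0 * S2 ≤ 0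
  · exact le_trans hP (sq_nonneg S1)
  · push_neg at hP
    have hAB : (m+1:ℝ) * A1^2 ≤ 2*(m+2) * (A0 * A2) := by
      have hm0 : (0:ℝ) ≤ (m:ℝ) := Nat.cast_nonneg m
      have hw0' : (0:ℝ) ≤ (w:ℝ) := Nat.cast_nonneg w
      have h1 : ((m:ℝ)+1)*((w:ℝ)+1) ≤ ((m:ℝ)+2)*((w:ℝ)+2) := by nlinarith
      have h2 := mul_le_mul_of_nonneg_right h1 (by positivity : (0:ℝ) ≤ ((w:ℝ)+1)*A0^2)
      have h3 : 2*((m:ℝ)+2)*(A0*A2) = ((m:ℝ)+2)*(((w:ℝ)+2)*((w:ℝ)+1)*A0)*A0 := by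
        calc 2*((m:ℝ)+2)*(A0*A2) = ((m:ℝ)+2)*(2*A2)*A0 := by ring
          _ = ((m:ℝ)+2)*(((w:ℝ)+2)*((w:ℝ)+1)*A0)*A0 := by rw [hA2]
      rw [hA1]
      nlinarith [h2, h3]
    have hchain : (m+1:ℝ) * A1^2 * (S0 * S2) ≤ (m+1:ℝ) * A1^2 * S1^2 := by
      calc (m+1:ℝ) * A1^2 * (S0 * S2) ≤ 2*(m+2) * (A0 * A2) * (S0 * S2) :=
            mul_le_mul_of_nonneg_right hAB (le_of_lt hP)
        _ = 2*(m+2 : ℝ) * ((A0 * S2) * (A2 * S0)) := by ring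
        _ ≤ (m+1 : ℝ) * (A1 * S1)^2 := hkey
        _ = (m+1:ℝ) * A1^2 * S1^2 := by ring
    have hpos : 0 < (m+1:ℝ) * A1^2 := by
      have : 0 < A1 := by rw [hA1]; positivity
      positivity
    exact le_of_mul_le_mul_left hchain hpos

lemma gamma_update {n k : ℕ} (hkn : k ≤ n) (κ : Fin n → ℝ)
    (hΓ : ∀ j, 1 ≤ j → j ≤ k → 0 < esymm n j κ) (i : Fin n) :
    ∀ j, j ≤ k - 1 → 0 < esymm n j (Function.update κ i 0) := by
  intro j
  induction j using Nat.strong_induction_on with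
  | _ j ih =>
    intro hj
    match j, hj with
    | 0, _ => rw [esymm_zero']; norm_num
    | (j'+1), hj =>
      have hjk : j' + 1 + 1 ≤ k := by omega
      have hprev : 0 < esymm n j' (Function.update κ i 0) := ih j' (by omega) (by omega)
      have hsplit1 := esymm_split n j' κ i
      have hΓ1 : 0 < esymm n (j'+1) κ := hΓ (j'+1) (by omega) (by omega)
      by_cases hci : κ i ≤ 0
      · nlinarith [mul_nonpos_of_nonpos_of_nonneg hci hprev.le]
      · push_neg at hci
        by_contra hcon
        push_neg at hcon
        have hsplit2 := esymm_split n (j'+1) κ i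
        have hΓ2 : 0 < esymm n (j'+2) κ := hΓ (j'+2) (by omega) (by omega)
        have hnewton := newton_weak (n := n) (m := j') (by omega) (Function.update κ i 0)
        set u := esymm n j' (Function.update κ i 0)
        set v := -(esymm n (j'+1) (Function.update κ i 0)) with hv
        set w := esymm n (j'+2) (Function.update κ i 0)
        have hv0 : 0 ≤ v := by rw [hv]; linarith
        have h1 : v < κ i * u := by
          have : esymm n (j'+1) κ = esymm n (j'+1) (Function.update κ i 0) + κ i * u := hsplit1
          rw [hv]; linarith
        have h2 : κ i * v < w := by
          have : esymm n (j'+2) κ = w + κ i * (-v) := by rw [hv]; simpa using hsplit2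
          nlinarith
        have h3 : u * w > v * v := by
          calc u * w > u * (κ i * v) := mul_lt_mul_of_pos_left h2 hprev
            _ = (κ i * u) * v := by ring
            _ ≥ v * v := mul_le_mul_of_nonneg_right h1.le hv0
        have h4 : u * w ≤ v * v := by
          have : v * v = esymm n (j'+1) (Function.update κ i 0) ^ 2 := by rw [hv]; ring
          rw [this]
          simpa using hnewton
        linarith


/-- For κ ∈ Γ_k ordered decreasingly, σ_{k-1}(κ|1) · κ_1 ≥ (k/n) σ_k(κ). -/
theorem stmt3 {n k : ℕ} (hn : 0 < n) (hk : 1 ≤ k) (hkn : k ≤ n) (κ : Fin n → ℝ)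
    (hord : ∀ i j : Fin n, i ≤ j → κ j ≤ κ i)
    (hΓ : ∀ j, 1 ≤ j → j ≤ k → 0 < esymm n j κ) :
    esymm n (k - 1) (Function.update κ ⟨0, hn⟩ 0) * κ ⟨0, hn⟩
      ≥ ((k : ℝ) / n) * esymm n k κ := by
  obtain ⟨k', rfl⟩ : ∃ k', k = k' + 1 := ⟨k - 1, by omega⟩
  set z : Fin n := ⟨0, hn⟩ with hz
  set μ := Function.update κ z 0 with hμ
  have hred : k' + 1 - 1 = k' := by omega
  rw [hred]
  have hmax1 : ∀ i, κ i ≤ κ z := fun i => hord z i (by simp [hz, Fin.le_def])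
  have hpos1 : 0 < κ z := by
    have h1 := hΓ 1 le_rfl (by omega)
    rw [esymm_one'] at h1
    have h2 : ∑ i, κ i ≤ ∑ _i : Fin n, κ z := Finset.sum_le_sum fun i _ => hmax1 i
    rw [Finset.sum_const, Finset.card_univ, Fintype.card_fin, nsmul_eq_mul] at h2
    by_contra hcon
    push_neg at hcon
    nlinarith [show (0:ℝ) < n by exact_mod_cast hn]
  have hnpos : (0:ℝ) < n := Nat.cast_pos.2 hn
  have hsplit := esymm_split n k' κ z
  have hσk : 0 < esymm n (k'+1) κ := hΓ (k'+1) (by omega) le_rfl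
  have hσk'μ : 0 < esymm n k' μ := gamma_update hkn κ hΓ z k' (by omega)
  by_cases hA : esymm n (k'+1) μ ≤ 0
  · have h1 : esymm n (k'+1) κ ≤ κ z * esymm n k' μ := by rw [hμ] at *; linarith
    have h2 : ((k'+1 : ℕ) : ℝ)/n ≤ 1 := by
      rw [div_le_one hnpos]
      exact_mod_cast hkn
    rw [ge_iff_le]
    calc ((k'+1 : ℕ) : ℝ)/n * esymm n (k'+1) κ ≤ 1 * esymm n (k'+1) κ :=
          mul_le_mul_of_nonneg_right h2 hσk.le
      _ = esymm n (k'+1) κ := one_mul _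
      _ ≤ κ z * esymm n k' μ := h1
      _ = esymm n k' μ * κ z := mul_comm _ _
  · push_neg at hA
    have hμΓ : ∀ j, 1 ≤ j → j ≤ k' + 1 → 0 < esymm n j μ := by
      intro j hj1 hj2
      rcases Nat.lt_or_ge j (k'+1) with h | h
      · exact gamma_update hkn κ hΓ z j (by omega)
      · have : j = k' + 1 := by omega
        rw [this]; exact hA
    set c : Fin n → ℝ := fun i => esymm n k' (Function.update μ i 0) with hc
    have hcpos : ∀ i, 0 < c i := fun i => gamma_update hkn μ hμΓ i k' (by omega)
    have hE2 : ∑ i, μ i * c i = ((k'+1 : ℕ) : ℝ) * esymm n (k'+1) μ := by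
      have := esymm_weighted_sum n k' μ
      rw [hc]
      push_cast
      exact this
    have hE3 : ∑ i, c i = ((n : ℝ) - k') * esymm n k' μ := esymm_sum_update n k' μ
    have hupd : Function.update μ z 0 = μ := by rw [hμ, Function.update_idem]
    have hcz : c z = esymm n k' μ := by
      calc c z = esymm n k' (Function.update μ z 0) := rfl
        _ = esymm n k' μ := by rw [hupd]
    have hμz : μ z = 0 := by rw [hμ, Function.update_self]
    have hstep : ∑ i, μ i * c i ≤ κ z * (((n : ℝ) - k' - 1) * esymm n k' μ) := by
      rw [← Finset.add_sum_erase _ (fun i => μ i * c i) (Finset.mem_univ z), hμz, zero_mul,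
        zero_add]
      have hb : ∑ i ∈ Finset.univ.erase z, μ i * c i
          ≤ ∑ i ∈ Finset.univ.erase z, κ z * c i := by
        refine Finset.sum_le_sum fun i hi => ?_
        have hiz : i ≠ z := Finset.ne_of_mem_erase hi
        have : μ i = κ i := by rw [hμ, Function.update_of_ne hiz]
        rw [this]
        exact mul_le_mul_of_nonneg_right (hmax1 i) (hcpos i).le
      refine le_trans hb ?_
      rw [← Finset.mul_sum]
      have hsum2 : ∑ i ∈ Finset.univ.erase z, c i = ((n : ℝ) - k') * esymm n k' μ - c z := by
        rw [Finset.sum_erase_eq_sub (Finset.mem_univ z), hE3]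
      rw [hsum2, hcz]
      have : (0:ℝ) ≤ κ z := hpos1.le
      nlinarith
    rw [hE2] at hstep
    rw [← hμ] at hsplit
    rw [ge_iff_le, div_mul_eq_mul_div, div_le_iff₀ hnpos]
    have hck : (0:ℝ) ≤ κ z * esymm n k' μ := mul_nonneg hpos1.le hσk'μ.le
    push_cast at hstep ⊢
    nlinarith [hstep, hsplit, hσk'μ, hpos1]
end

section
/- Let 2 ≤ k ≤ n and κ ∈ Γ_k. With H_j := binom(n,j)^{-1} σ_j(κ), the normalized symmetric means satisfy the Maclaurin inequalities H_k^{1/k} ≤ H_{k-1}^{1/(k-1)} ≤ ⋯ ≤ H_2^{1/2} ≤ H_1. -/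
section MaclaurinAux

noncomputable def Hm (s : Multiset ℝ) (m : ℕ) : ℝ :=
  s.esymm m / ((Multiset.card s).choose m : ℝ)

section
open Finset

lemma sum_prod_erase {ι : Type*} [DecidableEq ι] (S : Finset ι) (hS : S.Nonempty) (f : ι → ℝ) :
    ∑ k ∈ S, ∏ i ∈ S.erase k, f i
      = ∑ A ∈ S.powersetCard (S.card - 1), ∏ i ∈ A, f i := by
  refine Finset.sum_bij (fun k _ => S.erase k) ?_ ?_ ?_ ?_
  · intro k hk
    rw [mem_powersetCard]
    exact ⟨erase_subset _ _, by rw [card_erase_of_mem hk]⟩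
  · intro a ha b hb h
    by_contra hne
    have h1 : a ∈ S.erase b := mem_erase.2 ⟨hne, ha⟩
    rw [← h] at h1
    exact (mem_erase.1 h1).1 rfl
  · intro A hA
    rw [mem_powersetCard] at hA
    have hpos : 1 ≤ S.card := Finset.card_pos.2 hS
    have hcard : (S \ A).card = 1 := by
      rw [card_sdiff_of_subset hA.1, hA.2]
      omega
    obtain ⟨k, hk⟩ := Finset.card_eq_one.1 hcard
    have hkS : k ∈ S := by
      have : k ∈ S \ A := hk ▸ mem_singleton_self k
      exact (mem_sdiff.1 this).1
    refine ⟨k, hkS, ?_⟩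
    show S.erase k = A
    rw [← sdiff_singleton_eq_erase, ← hk, sdiff_sdiff_self_left, inter_eq_right.2 hA.1]
  · intro k hk; rfl


lemma powersetCard_erase {ι : Type*} [DecidableEq ι] (S : Finset ι) (i : ι) (m : ℕ) :
    (S.erase i).powersetCard m = (S.powersetCard m).filter (fun A => i ∉ A) := by
  ext A
  simp only [mem_powersetCard, mem_filter, subset_erase]
  tauto

lemma sum_sum_powersetCard_erase {ι : Type*} [DecidableEq ι] (S : Finset ι) (m : ℕ)
    (g : Finset ι → ℝ) :
    ∑ i ∈ S, ∑ A ∈ (S.erase i).powersetCard m, g A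
      = ∑ A ∈ S.powersetCard m, ((S.card - m : ℕ) : ℝ) * g A := by
  simp only [powersetCard_erase, sum_filter]
  rw [Finset.sum_comm]
  refine Finset.sum_congr rfl fun A hA => ?_
  rw [mem_powersetCard] at hA
  rw [Finset.sum_ite, Finset.sum_const, Finset.sum_const_zero, add_zero, nsmul_eq_mul]
  congr 1
  have : S.filter (fun i => i ∉ A) = S \ A := by
    ext x; simp [mem_sdiff]
  rw [this, card_sdiff_of_subset hA.1, hA.2]

lemma newton_top (n : ℕ) (hn : 2 ≤ n) (f : Fin n → ℝ) :
    (∑ A ∈ powersetCard (n-2) univ, ∏ i ∈ A, f i) * (∑ A ∈ powersetCard n univ, ∏ i ∈ A, f i)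
        * (2 * (n:ℝ)^2)
      ≤ (∑ A ∈ powersetCard (n-1) univ, ∏ i ∈ A, f i)^2 * ((n:ℝ) * ((n:ℕ) - 1 : ℕ)) := by
  set P : Fin n → ℝ := fun i => ∏ k ∈ univ.erase i, f k with hP
  have hcard : (univ : Finset (Fin n)).card = n := by simp
  have hne : (univ : Finset (Fin n)).Nonempty := by
    rw [← Finset.card_pos, hcard]; omega
  have hσn : ∑ A ∈ powersetCard n univ, ∏ i ∈ A, f i = ∏ i, f i := by
    have h5 : powersetCard n (univ : Finset (Fin n)) = {univ} := by
      simpa using powersetCard_self (univ : Finset (Fin n))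
    rw [h5, sum_singleton]
  have hb : ∑ A ∈ powersetCard (n-1) univ, ∏ i ∈ A, f i = ∑ i, P i := by
    have := sum_prod_erase (univ : Finset (Fin n)) hne f
    simp only [card_univ, Fintype.card_fin] at this
    exact this.symm
  have hPP : ∀ i k : Fin n, k ≠ i →
      P i * P k = (∏ j, f j) * ∏ j ∈ (univ.erase i).erase k, f j := by
    intro i k hki
    have hk : k ∈ univ.erase i := mem_erase.2 ⟨hki, mem_univ k⟩
    have hi : i ∈ univ.erase k := mem_erase.2 ⟨fun h => hki h.symm, mem_univ i⟩
    have e1 : P i = f k * ∏ j ∈ (univ.erase i).erase k, f j :=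
      (Finset.mul_prod_erase _ f hk).symm
    have e2 : P k = f i * ∏ j ∈ (univ.erase k).erase i, f j :=
      (Finset.mul_prod_erase _ f hi).symm
    have e3 : (univ.erase k).erase i = (univ.erase i).erase k := Finset.erase_right_comm
    have e4 : ∏ j, f j = f i * P i := (Finset.mul_prod_erase _ f (mem_univ i)).symm
    rw [e1, e2, e3, e4, e1]
    ring
  have hkey : ∑ i, ∑ k ∈ univ.erase i, P i * P k
      = (∏ j, f j) * (2 * ∑ A ∈ powersetCard (n-2) univ, ∏ i ∈ A, f i) := by
    have step1 : ∀ i : Fin n, ∑ k ∈ univ.erase i, P i * P k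
        = (∏ j, f j) * ∑ A ∈ ((univ : Finset (Fin n)).erase i).powersetCard (n-2), ∏ j ∈ A, f j := by
      intro i
      rw [Finset.mul_sum]
      have hnei : ((univ : Finset (Fin n)).erase i).Nonempty := by
        rw [← Finset.card_pos, card_erase_of_mem (mem_univ i), hcard]; omega
      have : ∑ k ∈ univ.erase i, P i * P k
          = ∑ k ∈ univ.erase i, (∏ j, f j) * ∏ j ∈ ((univ : Finset (Fin n)).erase i).erase k, f j := by
        refine Finset.sum_congr rfl fun k hk => hPP i k (mem_erase.1 hk).1
      rw [this, ← Finset.mul_sum, sum_prod_erase _ hnei f, card_erase_of_mem (mem_univ i), hcard]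
      have h11 : n - 1 - 1 = n - 2 := by omega
      rw [h11, Finset.mul_sum]
    calc ∑ i, ∑ k ∈ univ.erase i, P i * P k
        = ∑ i, (∏ j, f j) * ∑ A ∈ ((univ : Finset (Fin n)).erase i).powersetCard (n-2), ∏ j ∈ A, f j := by
          exact Finset.sum_congr rfl fun i _ => step1 i
      _ = (∏ j, f j) * ∑ i, ∑ A ∈ ((univ : Finset (Fin n)).erase i).powersetCard (n-2), ∏ j ∈ A, f j := by
          rw [Finset.mul_sum]
      _ = (∏ j, f j) * ∑ A ∈ powersetCard (n-2) univ, ((n - (n-2) : ℕ) : ℝ) * ∏ j ∈ A, f j := by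
          rw [sum_sum_powersetCard_erase univ (n-2) (fun A => ∏ j ∈ A, f j), hcard]
      _ = (∏ j, f j) * (2 * ∑ A ∈ powersetCard (n-2) univ, ∏ i ∈ A, f i) := by
          rw [Finset.mul_sum]
          have h2 : (n - (n-2) : ℕ) = 2 := by omega
          rw [h2]
          push_cast
          simp only [Finset.mul_sum]
  have hleft : ∑ i, ∑ k ∈ univ.erase i, P i * P k = (∑ i, P i)^2 - ∑ i, (P i)^2 := by
    have : ∀ i : Fin n, ∑ k ∈ univ.erase i, P i * P k = P i * (∑ k, P k) - (P i)^2 := by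
      intro i
      rw [← Finset.mul_sum, Finset.sum_erase_eq_sub (mem_univ i)]
      ring
    rw [Finset.sum_congr rfl fun i _ => this i, Finset.sum_sub_distrib, ← Finset.sum_mul]
    ring
  have hCS : (∑ i, P i)^2 ≤ (n : ℝ) * ∑ i, (P i)^2 := by
    have := sq_sum_le_card_mul_sum_sq (s := (univ : Finset (Fin n))) (f := P)
    rwa [hcard] at this
  have hn1 : ((n - 1 : ℕ) : ℝ) = (n : ℝ) - 1 := by
    have : 1 ≤ n := by omega
    push_cast [this]; ring
  rw [hσn, hb, hn1]
  have hkey2 : (∏ j, f j) * (2 * ∑ A ∈ powersetCard (n-2) univ, ∏ i ∈ A, f i)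
      = (∑ i, P i)^2 - ∑ i, (P i)^2 := by rw [← hkey, hleft]
  have hnn : (2:ℝ) ≤ (n:ℝ) := by exact_mod_cast hn
  nlinarith [hCS, hkey2, sq_nonneg (∑ i, P i)]

lemma two_mul_choose_two (n : ℕ) : 2 * n.choose 2 = n * (n - 1) := by
  rcases n with _ | _ | m
  · simp
  · simp
  · have h2' : 2 ≤ m + 2 := by omega
    have h := Nat.choose_mul_factorial_mul_factorial h2'
    have hfact : (m + 2).factorial = (m + 2) * (m + 1) * m.factorial := by
      rw [Nat.factorial_succ, Nat.factorial_succ]; ring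
    have h3 : (m + 2 - 2) = m := by omega
    rw [h3, Nat.factorial_two] at h
    have h5 : ((m+2).choose 2 * 2) * m.factorial = ((m + 2) * (m + 1)) * m.factorial := by
      calc ((m+2).choose 2 * 2) * m.factorial = (m+2).choose 2 * 2 * m.factorial := by ring
        _ = (m + 2).factorial := h
        _ = ((m + 2) * (m + 1)) * m.factorial := by rw [hfact]
    have h4 := Nat.eq_of_mul_eq_mul_right (Nat.factorial_pos m) h5
    have h6 : m + 2 - 1 = m + 1 := by omega
    calc 2 * (m+2).choose 2 = (m+2).choose 2 * 2 := by ring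
      _ = (m+2) * (m+1) := h4
      _ = (m + 2) * (m + 2 - 1) := by rw [h6]

lemma newton_base (s : Multiset ℝ) (h2 : 2 ≤ Multiset.card s) :
    Hm s (Multiset.card s - 2) * Hm s (Multiset.card s) ≤ Hm s (Multiset.card s - 1) ^ 2 := by
  set n := Multiset.card s with hn
  -- realize s as values of a function on Fin n
  have hl : (↑s.toList : Multiset ℝ) = s := s.coe_toList
  have hcardl : n = s.toList.length := by rw [hn, ← hl]; simp
  have hmap : Multiset.map s.toList.get (univ : Finset (Fin s.toList.length)).val = s := by
    rw [Fin.univ_val_map, List.ofFn_get, hl]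
  have hesymm : ∀ m, s.esymm m
      = ∑ A ∈ powersetCard m (univ : Finset (Fin s.toList.length)), ∏ i ∈ A, s.toList.get i := by
    intro m
    conv_lhs => rw [← hmap]
    rw [Finset.esymm_map_val]
  have hn2 : 2 ≤ s.toList.length := by omega
  have key := newton_top s.toList.length hn2 s.toList.get
  rw [← hesymm, ← hesymm, ← hesymm, ← hcardl] at key
  have hs2 : n.choose (n-2) = n.choose 2 := Nat.choose_symm h2
  have hs1 : n.choose (n-1) = n := by
    rw [show n - 1 = n - 1 from rfl, Nat.choose_symm (by omega : 1 ≤ n), Nat.choose_one_right]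
  have hsn : n.choose n = 1 := Nat.choose_self n
  unfold Hm
  rw [← hn, hs2, hs1, hsn]
  have hc2 : (0:ℝ) < (n.choose 2 : ℝ) := by
    exact_mod_cast Nat.choose_pos (show 2 ≤ n by omega)
  have hnpos : (0:ℝ) < (n:ℝ) := by
    have : 0 < n := by omega
    exact_mod_cast this
  rw [Nat.cast_one, div_one, div_pow, div_mul_eq_mul_div, div_le_div_iff₀ hc2 (by positivity)]
  have hcc : 2 * (n.choose 2:ℝ) = (n:ℝ) * ((n-1:ℕ):ℝ) := by exact_mod_cast two_mul_choose_two n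
  nlinarith [key, hcc]

end

section
open Polynomial

lemma choose_id (n m : ℕ) (hn : 1 ≤ n) (h : m ≤ n - 1) :
    n * (n-1).choose m = (n - m) * n.choose m := by
  have h1 : m ≤ n := by omega
  have e1 := Nat.choose_mul_factorial_mul_factorial h1
  have e2 := Nat.choose_mul_factorial_mul_factorial h
  have e3 : n.factorial = n * (n-1).factorial := by
    rcases n with _ | k
    · omega
    · simp [Nat.factorial_succ]
  have e4 : (n - m).factorial = (n - m) * (n - 1 - m).factorial := by
    have : n - m = (n - 1 - m) + 1 := by omega
    rw [this, Nat.factorial_succ]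
  have key : (n * (n-1).choose m) * (m.factorial * (n-1-m).factorial)
      = ((n - m) * n.choose m) * (m.factorial * (n-1-m).factorial) := by
    calc (n * (n-1).choose m) * (m.factorial * (n-1-m).factorial)
        = n * ((n-1).choose m * m.factorial * (n-1-m).factorial) := by ring
      _ = n * (n-1).factorial := by rw [e2]
      _ = n.factorial := e3.symm
      _ = n.choose m * m.factorial * (n - m).factorial := e1.symm
      _ = n.choose m * m.factorial * ((n - m) * (n - 1 - m).factorial) := by rw [e4]
      _ = ((n - m) * n.choose m) * (m.factorial * (n-1-m).factorial) := by ring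
  exact Nat.eq_of_mul_eq_mul_right (by positivity) key

lemma esymm_derivative (s : Multiset ℝ) (hs : 1 ≤ Multiset.card s) :
    ∃ t : Multiset ℝ, Multiset.card t = Multiset.card s - 1 ∧
      ∀ m, m ≤ Multiset.card s - 1 → Hm t m = Hm s m := by
  classical
  set n := Multiset.card s with hn
  set p : ℝ[X] := (s.map (fun a => X - C a)).prod with hp
  have hmonic : p.Monic :=
    monic_multiset_prod_of_monic _ _ (fun a _ => monic_X_sub_C a)
  have hdeg : p.natDegree = n := natDegree_multiset_prod_X_sub_C_eq_card s
  have hroots : p.roots = s := roots_multiset_prod_X_sub_C s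
  set q := derivative p with hq
  have hcn : p.coeff n = 1 := by
    rw [← hdeg]; exact hmonic.coeff_natDegree
  have hqc : q.coeff (n-1) = (n : ℝ) := by
    rw [hq, coeff_derivative, show n - 1 + 1 = n by omega, hcn, one_mul]
    have h9 : ((n-1:ℕ):ℝ) + 1 = ((n-1+1 : ℕ) : ℝ) := by push_cast; ring
    rw [h9, show n-1+1 = n by omega]
  have hqne : q ≠ 0 := by
    intro h0
    rw [h0, coeff_zero] at hqc
    have : (n:ℝ) ≠ 0 := by positivity
    · exact this hqc.symm
  have hqdeg : q.natDegree = n - 1 := by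
    refine le_antisymm ?_ ?_
    · have := natDegree_derivative_le p
      rwa [hdeg] at this
    · refine le_natDegree_of_ne_zero ?_
      rw [hqc]
      positivity
  have hqlead : q.leadingCoeff = (n : ℝ) := by
    rw [leadingCoeff, hqdeg, hqc]
  have hcroots : Multiset.card q.roots = n - 1 := by
    refine le_antisymm ?_ ?_
    · have := q.card_roots'; rwa [hqdeg] at this
    · have h1 := p.card_roots_le_derivative
      rw [hroots, ← hq] at h1
      omega
  refine ⟨q.roots, hcroots, ?_⟩
  intro m hm
  -- coefficient computed two ways
  have hk1 : n - 1 - m ≤ q.natDegree := by rw [hqdeg]; omega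
  have he1 : q.coeff (n-1-m) = (n:ℝ) * ((-1)^m * q.roots.esymm m) := by
    have := Polynomial.coeff_eq_esymm_roots_of_card (p := q) (by rw [hcroots, hqdeg]) hk1
    rw [hqlead, hqdeg, show n - 1 - (n - 1 - m) = m by omega] at this
    rw [this]; ring
  have he2 : q.coeff (n-1-m) = ((n - m : ℕ) : ℝ) * ((-1)^m * s.esymm m) := by
    rw [hq, coeff_derivative, show n - 1 - m + 1 = n - m by omega]
    have hcoeffp : p.coeff (n - m) = (-1)^m * s.esymm m := by
      have := Multiset.prod_X_sub_C_coeff s (show n - m ≤ Multiset.card s by omega)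
      rw [← hn, show n - (n - m) = m by omega] at this
      exact this
    rw [hcoeffp]
    have : ((n - 1 - m : ℕ) : ℝ) + 1 = ((n - m : ℕ) : ℝ) := by
      have h' : n - m = (n - 1 - m) + 1 := by omega
      rw [h']; push_cast; ring
    rw [this]; ring
  have hcancel : (n:ℝ) * q.roots.esymm m = ((n - m : ℕ) : ℝ) * s.esymm m := by
    have h3 : (n:ℝ) * q.roots.esymm m * (-1)^m = ((n - m : ℕ) : ℝ) * s.esymm m * (-1)^m := by
      have := he1.symm.trans he2
      calc (n:ℝ) * q.roots.esymm m * (-1)^m = (n:ℝ) * ((-1)^m * q.roots.esymm m) := by ring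
        _ = ((n - m : ℕ) : ℝ) * ((-1)^m * s.esymm m) := this
        _ = ((n - m : ℕ) : ℝ) * s.esymm m * (-1)^m := by ring
    exact mul_right_cancel₀ (pow_ne_zero m (by norm_num)) h3
  -- conclude Hm equality
  unfold Hm
  rw [hcroots, ← hn]
  have hchoose : (n:ℝ) * ((n-1).choose m : ℝ) = ((n - m : ℕ):ℝ) * (n.choose m : ℝ) := by
    exact_mod_cast choose_id n m hs hm
  have hc1 : (0:ℝ) < ((n-1).choose m : ℝ) := by exact_mod_cast Nat.choose_pos hm
  have hc2 : (0:ℝ) < (n.choose m : ℝ) := by exact_mod_cast Nat.choose_pos (show m ≤ n by omega)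
  have hnm : (0:ℝ) < ((n - m : ℕ) : ℝ) := by
    have : 0 < n - m := by omega
    exact_mod_cast this
  have hnpos : (0:ℝ) < (n:ℝ) := by exact_mod_cast hs
  rw [div_eq_div_iff hc1.ne' hc2.ne']
  refine mul_left_cancel₀ hnpos.ne' ?_
  calc (n:ℝ) * (q.roots.esymm m * ↑(n.choose m))
      = ((n:ℝ) * q.roots.esymm m) * ↑(n.choose m) := by ring
    _ = (((n - m : ℕ):ℝ) * s.esymm m) * ↑(n.choose m) := by rw [hcancel]
    _ = s.esymm m * (((n - m : ℕ):ℝ) * ↑(n.choose m)) := by ring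
    _ = s.esymm m * ((n:ℝ) * ↑((n-1).choose m)) := by rw [← hchoose]
    _ = (n:ℝ) * (s.esymm m * ↑((n-1).choose m)) := by ring

end

lemma newton_aux : ∀ (N : ℕ) (s : Multiset ℝ) (j : ℕ), Multiset.card s = N → 1 ≤ j →
    j + 1 ≤ N → Hm s (j-1) * Hm s (j+1) ≤ Hm s j ^ 2 := by
  intro N
  induction N using Nat.strong_induction_on with
  | _ N ih =>
    intro s j hcard hj hjN
    rcases eq_or_lt_of_le hjN with heq | hlt
    · have hb := newton_base s (by omega)
      rw [hcard, ← heq, show j+1-2 = j-1 by omega, show j+1-1 = j by omega] at hb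
      exact hb
    · obtain ⟨t, hct, hHm⟩ := esymm_derivative s (by omega)
      rw [← hHm (j-1) (by omega), ← hHm (j+1) (by omega), ← hHm j (by omega)]
      exact ih (N-1) (by omega) t j (by omega) hj (by omega)

lemma newton (s : Multiset ℝ) (j : ℕ) (hj : 1 ≤ j) (hjs : j + 1 ≤ Multiset.card s) :
    Hm s (j-1) * Hm s (j+1) ≤ Hm s j ^ 2 :=
  newton_aux (Multiset.card s) s j rfl hj hjs

lemma Hm_zero (s : Multiset ℝ) : Hm s 0 = 1 := by
  unfold Hm
  rw [Nat.choose_zero_right]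
  simp [Multiset.esymm, Multiset.powersetCard_zero_left]

lemma maclaurin_pow (s : Multiset ℝ) (k : ℕ) (hk2 : 2 ≤ k) (hkn : k ≤ Multiset.card s)
    (hpos : ∀ i, 1 ≤ i → i ≤ k → 0 < s.esymm i) :
    ∀ j, 2 ≤ j → j ≤ k → Hm s j ^ (j-1) ≤ Hm s (j-1) ^ j := by
  have hHpos : ∀ i, 1 ≤ i → i ≤ k → 0 < Hm s i := by
    intro i h1 h2
    unfold Hm
    have : 0 < (Multiset.card s).choose i := Nat.choose_pos (by omega)
    have h3 : (0:ℝ) < ((Multiset.card s).choose i : ℝ) := by exact_mod_cast this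
    exact div_pos (hpos i h1 h2) h3
  refine Nat.le_induction ?_ ?_
  · intro h2k
    have hnewton := newton s 1 le_rfl (by omega)
    rw [show (1:ℕ)-1 = 0 from rfl, Hm_zero, one_mul] at hnewton
    simpa using hnewton
  · intro j hj2 IH hj1k
    have hjk : j ≤ k := by omega
    have IH' := IH hjk
    set a := Hm s (j-1) with ha
    set b := Hm s j with hb
    set c := Hm s (j+1) with hc
    have hapos : 0 < a := hHpos (j-1) (by omega) (by omega)
    have hbpos : 0 < b := hHpos j (by omega) hjk
    have hcpos : 0 < c := hHpos (j+1) (by omega) hj1k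
    have h1 : a * c ≤ b^2 := newton s j (by omega) (by omega)
    have step1 : (a*c)^j ≤ (b^2)^j := pow_le_pow_left₀ (by positivity) h1 j
    have step2 : c^j * a^j ≤ b^(j+1) * a^j := by
      calc c^j * a^j = (a*c)^j := by rw [mul_pow]; ring
        _ ≤ (b^2)^j := step1
        _ = b^(j+1) * b^(j-1) := by rw [← pow_mul, ← pow_add]; congr 1; omega
        _ ≤ b^(j+1) * a^j := by
            exact mul_le_mul_of_nonneg_left IH' (by positivity)
    have := le_of_mul_le_mul_right step2 (by positivity)
    rw [show j + 1 - 1 = j by omega]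
    exact this

-- rpow step
lemma rpow_step (a b : ℝ) (j : ℕ) (hj : 2 ≤ j) (ha : 0 < a) (hb : 0 < b)
    (h : a ^ (j-1) ≤ b ^ j) : a ^ ((1:ℝ)/j) ≤ b ^ ((1:ℝ)/(j-1:ℕ)) := by
  have hj1 : (0:ℝ) < ((j-1:ℕ):ℝ) := by
    have : 0 < j - 1 := by omega
    exact_mod_cast this
  have hjr : (0:ℝ) < (j:ℝ) := by positivity
  have key := Real.rpow_le_rpow (by positivity : (0:ℝ) ≤ a ^ (j-1))
    h (by positivity : (0:ℝ) ≤ 1/(((j-1:ℕ):ℝ) * (j:ℝ)))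
  rw [← Real.rpow_natCast a (j-1), ← Real.rpow_natCast b j,
    ← Real.rpow_mul ha.le, ← Real.rpow_mul hb.le] at key
  have hne1 : ((j-1:ℕ):ℝ) ≠ 0 := hj1.ne'
  have hne2 : (j:ℝ) ≠ 0 := hjr.ne'
  have e1 : ((j-1:ℕ):ℝ) * (1/(((j-1:ℕ):ℝ) * (j:ℝ))) = 1/(j:ℝ) := by
    rw [mul_one_div, ← div_div, div_self hne1]
  have e2 : (j:ℝ) * (1/(((j-1:ℕ):ℝ) * (j:ℝ))) = 1/((j-1:ℕ):ℝ) := by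
    rw [mul_one_div, mul_comm ((j-1:ℕ):ℝ) (j:ℝ), ← div_div, div_self hne2]
  rwa [e1, e2] at key

end MaclaurinAux

/-- Maclaurin's inequalities: for κ ∈ Γ_k and H_j = σ_j(κ)/C(n,j),
    H_k^{1/k} ≤ H_{k-1}^{1/(k-1)} ≤ ⋯ ≤ H_1. -/
theorem stmt4 {n k : ℕ} (hk : 2 ≤ k) (hkn : k ≤ n) (κ : Fin n → ℝ)
    (hΓ : ∀ j, 1 ≤ j → j ≤ k → 0 < esymm n j κ) :
    ∀ j, 2 ≤ j → j ≤ k →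
      (esymm n j κ / (n.choose j : ℝ)) ^ ((1 : ℝ) / j)
        ≤ (esymm n (j - 1) κ / (n.choose (j - 1) : ℝ)) ^ ((1 : ℝ) / (j - 1 : ℕ)) := by
  intro j hj2 hjk
  set s : Multiset ℝ := Multiset.map κ (Finset.univ : Finset (Fin n)).val with hs
  have hcard : Multiset.card s = n := by simp [hs]
  have hesymm : ∀ m, s.esymm m = esymm n m κ := by
    intro m
    rw [hs, Finset.esymm_map_val]
    rfl
  have hHm : ∀ m, Hm s m = esymm n m κ / (n.choose m : ℝ) := by
    intro m
    unfold Hm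
    rw [hcard, hesymm]
  have hpos : ∀ i, 1 ≤ i → i ≤ k → 0 < s.esymm i := by
    intro i h1 h2
    rw [hesymm]; exact hΓ i h1 h2
  have hHpos : ∀ i, 1 ≤ i → i ≤ k → 0 < Hm s i := by
    intro i h1 h2
    unfold Hm
    have h3 : (0:ℝ) < ((Multiset.card s).choose i : ℝ) := by
      have : 0 < (Multiset.card s).choose i := Nat.choose_pos (by omega)
      exact_mod_cast this
    exact div_pos (hpos i h1 h2) h3
  have hmac := maclaurin_pow s k hk (by omega) hpos j hj2 hjk
  have := rpow_step (Hm s j) (Hm s (j-1)) j hj2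
    (hHpos j (by omega) hjk) (hHpos (j-1) (by omega) (by omega)) hmac
  rwa [hHm, hHm] at this
end

section
/- Let 1 ≤ k ≤ n and κ ∈ Γ_k with entries ordered κ_1 ≥ ⋯ ≥ κ_n. Then κ_n ≥ -((n-k)/k) · κ_1; in particular every entry κ_j satisfies κ_j ≥ -((n-k)/k) κ_1. -/
open Polynomial

namespace Multiset

section CommSemiring

variable {R : Type*} [CommSemiring R]

theorem esymm_zero (s : Multiset R) : s.esymm 0 = 1 := by
  simp [esymm]

theorem esymm_one (s : Multiset R) : s.esymm 1 = s.sum := by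
  simp [esymm, powersetCard_one, map_map]

theorem esymm_eq_zero_of_card_lt {s : Multiset R} {j : ℕ} (h : card s < j) : s.esymm j = 0 := by
  simp [esymm, powersetCard_eq_empty _ h]

theorem esymm_cons_succ (a : R) (s : Multiset R) (j : ℕ) :
    (a ::ₘ s).esymm (j + 1) = s.esymm (j + 1) + a * s.esymm j := by
  simp only [esymm, powersetCard_cons, map_add, sum_add, map_map, Function.comp_def, prod_cons,
    ← sum_map_mul_left]

end CommSemiring

theorem coeff_prod_X_sub_C_card_sub {R : Type*} [CommRing R] (s : Multiset R) {j : ℕ}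
    (hj : j ≤ card s) :
    (s.map fun a => X - C a).prod.coeff (card s - j) = (-1) ^ j * s.esymm j := by
  rw [prod_X_sub_C_coeff s (Nat.sub_le _ _), Nat.sub_sub_self hj]

/-- `u` is the multiset of roots of the derivative of `∏ (X - a)`, which splits over `ℝ` by
Rolle's theorem. -/
theorem exists_card_mul_esymm_eq (s : Multiset ℝ) (hs : 0 < card s) :
    ∃ u : Multiset ℝ, card u = card s - 1 ∧
      ∀ j < card s, (card s : ℝ) * u.esymm j = (card s - j) * s.esymm j := by
  set m := card s
  set p : ℝ[X] := (s.map fun a => X - C a).prod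
  set q := derivative p
  have hp_deg : p.natDegree = m := natDegree_multiset_prod_X_sub_C_eq_card s
  have hq_coeff (j : ℕ) (hj : j < m) : q.coeff (m - 1 - j) = (-1) ^ j * s.esymm j * (m - j) := by
    rw [coeff_derivative, show m - 1 - j + 1 = m - j by omega, coeff_prod_X_sub_C_card_sub s hj.le,
      Nat.cast_sub (by omega), Nat.cast_sub (by omega)]
    push_cast
    ring
  have hq_top : q.coeff (m - 1) = m := by simpa [esymm_zero] using hq_coeff 0 hs
  have hq_deg : q.natDegree = m - 1 :=
    le_antisymm (hp_deg ▸ natDegree_derivative_le p)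
      (le_natDegree_of_ne_zero (by rw [hq_top]; positivity))
  have hq_roots : card q.roots = q.natDegree := by
    have h := card_roots_le_derivative p
    rw [roots_multiset_prod_X_sub_C] at h
    change m ≤ card q.roots + 1 at h
    exact le_antisymm (card_roots' q) (by omega)
  refine ⟨q.roots, hq_roots.trans hq_deg, fun j hj => ?_⟩
  have hvieta := coeff_eq_esymm_roots_of_card hq_roots (k := m - 1 - j) (by omega)
  rw [hq_coeff j hj, leadingCoeff, hq_deg, hq_top, show m - 1 - (m - 1 - j) = j by omega] at hvieta
  have hsign : (-1 : ℝ) ^ j * (-1) ^ j = 1 := by rw [← mul_pow]; norm_num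
  linear_combination (-(-1 : ℝ) ^ j) * hvieta + ((m - j) * s.esymm j - m * q.roots.esymm j) * hsign

theorem esymm_newton_of_card_eq (s : Multiset ℝ) (j : ℕ) (hs : card s = j + 2) :
    2 * (j + 2) * (s.esymm (j + 2) * s.esymm j) ≤ (j + 1) * s.esymm (j + 1) ^ 2 := by
  induction s using Multiset.induction_on generalizing j with
  | empty => simp at hs
  | cons a s ih =>
    rw [card_cons] at hs
    rcases j with _ | j
    · obtain ⟨b, rfl⟩ := card_eq_one.1 (by omega : card s = 1)
      simp only [CharP.cast_eq_zero, zero_add, esymm_pair_two, esymm_pair_one, esymm_zero]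
      nlinarith [sq_nonneg (a - b)]
    · have ih' := ih j (by omega)
      rw [esymm_cons_succ, esymm_cons_succ, esymm_cons_succ,
        esymm_eq_zero_of_card_lt (by omega : card s < j + 1 + 2)]
      push_cast
      nlinarith [sq_nonneg ((j + 2) * s.esymm (j + 2) - a * s.esymm (j + 1)),
        mul_le_mul_of_nonneg_left ih' (sq_nonneg a)]

/-- Newton's inequality, in the form `E_{j+2} E_j ≤ E_{j+1}²` for the normalized
`E_i = σ_i / C(card s, i)`, with the binomial coefficients cleared. -/
theorem esymm_newton (s : Multiset ℝ) (j : ℕ) :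
    (j + 2) * (card s - j) * (s.esymm (j + 2) * s.esymm j) ≤
      (j + 1) * (card s - j - 1) * s.esymm (j + 1) ^ 2 := by
  induction hm : card s using Nat.strong_induction_on generalizing s with
  | _ m ih =>
    rcases lt_trichotomy (j + 2) m with hlt | heq | hgt
    · obtain ⟨u, hu, hsu⟩ := exists_card_mul_esymm_eq s (by omega)
      rw [hm] at hu hsu
      have ihu := ih (m - 1) (by omega) u hu
      rw [Nat.cast_sub (by omega : 1 ≤ m), Nat.cast_one] at ihu
      have h0 := hsu j (by omega)
      have h1 := hsu (j + 1) (by omega)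
      have h2 := hsu (j + 2) (by omega)
      push_cast at h1 h2
      have hpos : (0 : ℝ) < (m - j - 1) * (m - j - 2) := by
        have : (j : ℝ) + 2 < m := by exact_mod_cast hlt
        nlinarith
      refine le_of_mul_le_mul_right ?_ hpos
      have hscaled := mul_le_mul_of_nonneg_left ihu (sq_nonneg (m : ℝ))
      linear_combination hscaled
        - (j + 2) * (m - 1 - j) * (m * u.esymm (j + 2)) * h0
        - (j + 2) * (m - 1 - j) * ((m - j) * s.esymm j) * h2
        + (j + 1) * (m - 2 - j) * (m * u.esymm (j + 1) + (m - (j + 1)) * s.esymm (j + 1)) * h1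
    · have htop := esymm_newton_of_card_eq s j (hm.trans heq.symm)
      rw [← heq]
      push_cast
      linarith
    · rw [esymm_eq_zero_of_card_lt (hm ▸ hgt), zero_mul, mul_zero]
      rcases Nat.lt_succ_iff_lt_or_eq.1 hgt with hlt | rfl
      · simp [esymm_eq_zero_of_card_lt (hm ▸ hlt)]
      · simp

/-- Gårding's cone `Γ_k` on multisets of reals; the case `j = 0` is harmless as `σ_0 = 1`. -/
def gammaCone (k : ℕ) : Set (Multiset ℝ) :=
  {s | ∀ j ≤ k, 0 < s.esymm j}

theorem gammaCone_anti : Antitone gammaCone :=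
  fun _ _ hjk _ hs i hi => hs i (hi.trans hjk)

theorem le_card_of_mem_gammaCone {s : Multiset ℝ} {k : ℕ} (hs : s ∈ gammaCone k) : k ≤ card s :=
  not_lt.1 fun h => (hs k le_rfl).ne' (esymm_eq_zero_of_card_lt h)

theorem mem_gammaCone_of_cons {a : ℝ} {s : Multiset ℝ} {k : ℕ} (ha : a ≤ 0)
    (hs : a ::ₘ s ∈ gammaCone k) : s ∈ gammaCone k := by
  intro j hj
  induction j with
  | zero => simp [esymm_zero]
  | succ j ih =>
    have h := hs (j + 1) hj
    rw [esymm_cons_succ] at h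
    nlinarith [ih (by omega)]

/-- In normalized form `E_{j+1} / E_j ≤ E_1 / E_0`: by Newton's inequalities these ratios
decrease. -/
theorem card_mul_esymm_succ_le {s : Multiset ℝ} {j : ℕ} (hs : s ∈ gammaCone (j + 1)) :
    card s * (j + 1) * s.esymm (j + 1) ≤ (card s - j) * s.sum * s.esymm j := by
  induction j with
  | zero => simp [esymm_zero, esymm_one]
  | succ j ih =>
    have ih := ih (gammaCone_anti (by omega) hs)
    have hcard : (j : ℝ) + 2 ≤ card s := by exact_mod_cast le_card_of_mem_gammaCone hs
    have hj := hs j (by omega)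
    have hj1 := hs (j + 1) (by omega)
    refine le_of_mul_le_mul_right ?_ (by nlinarith : (0 : ℝ) < (card s - j) * s.esymm j)
    push_cast
    calc (card s : ℝ) * (j + 1 + 1) * s.esymm (j + 2) * ((card s - j) * s.esymm j)
        = card s * ((j + 2) * (card s - j) * (s.esymm (j + 2) * s.esymm j)) := by ring
      _ ≤ card s * ((j + 1) * (card s - j - 1) * s.esymm (j + 1) ^ 2) :=
        mul_le_mul_of_nonneg_left (esymm_newton s j) (Nat.cast_nonneg _)
      _ = ((card s - j - 1) * s.esymm (j + 1)) * (card s * (j + 1) * s.esymm (j + 1)) := by ring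
      _ ≤ ((card s - j - 1) * s.esymm (j + 1)) * ((card s - j) * s.sum * s.esymm j) :=
        mul_le_mul_of_nonneg_left ih (by nlinarith)
      _ = (card s - (j + 1)) * s.sum * s.esymm (j + 1) * ((card s - j) * s.esymm j) := by ring

theorem succ_mul_esymm_succ_le {s : Multiset ℝ} {k : ℕ} {L : ℝ} (hs : s ∈ gammaCone (k + 1))
    (hL : ∀ x ∈ s, x ≤ L) :
    (k + 1) * s.esymm (k + 1) ≤ (card s - k) * L * s.esymm k := by
  have hcard : (k : ℝ) + 1 ≤ card s := by exact_mod_cast le_card_of_mem_gammaCone hs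
  have hsum : s.sum ≤ card s * L := by simpa using sum_le_card_nsmul s L hL
  have hk := hs k (by omega)
  refine le_of_mul_le_mul_left ?_ (by linarith : (0 : ℝ) < card s)
  calc (card s : ℝ) * ((k + 1) * s.esymm (k + 1))
      ≤ (card s - k) * s.sum * s.esymm k := by linarith [card_mul_esymm_succ_le hs]
    _ ≤ (card s - k) * (card s * L) * s.esymm k := by gcongr; linarith
    _ = card s * ((card s - k) * L * s.esymm k) := by ring

theorem neg_mul_le_mul_of_mem_gammaCone {s : Multiset ℝ} {k : ℕ} {a L : ℝ} (hk : 1 ≤ k)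
    (hs : s ∈ gammaCone k) (hL : ∀ x ∈ s, x ≤ L) (ha : a ∈ s) :
    -((card s - k) * L) ≤ k * a := by
  have hcard : (k : ℝ) ≤ card s := by exact_mod_cast le_card_of_mem_gammaCone hs
  rcases le_or_gt 0 a with ha0 | ha0
  · nlinarith [hL a ha]
  obtain ⟨w, rfl⟩ : ∃ w, s = a ::ₘ w := ⟨s.erase a, (cons_erase ha).symm⟩
  obtain ⟨k, rfl⟩ : ∃ j, k = j + 1 := ⟨k - 1, by omega⟩
  have hw := mem_gammaCone_of_cons ha0.le hs
  have hbound := succ_mul_esymm_succ_le hw fun x hx => hL x (mem_cons_of_mem hx)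
  have hsk := hs (k + 1) le_rfl
  rw [esymm_cons_succ] at hsk
  rw [card_cons]
  push_cast
  refine le_of_mul_le_mul_right ?_ (hw k (by omega))
  nlinarith

end Multiset

/-- For κ ∈ Γ_k ordered decreasingly, κ_n ≥ -((n-k)/k) κ_1, and in particular
    every entry κ_j ≥ -((n-k)/k) κ_1. -/
theorem stmt6 {n k : ℕ} (hk : 1 ≤ k) (hkn : k ≤ n) (κ : Fin n → ℝ)
    (hord : ∀ i j : Fin n, i ≤ j → κ j ≤ κ i)
    (hΓ : ∀ j, 1 ≤ j → j ≤ k → 0 < esymm n j κ) :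
    κ ⟨n - 1, by omega⟩ ≥ -(((n : ℝ) - k) / k) * κ ⟨0, by omega⟩ ∧
      ∀ j : Fin n, κ j ≥ -(((n : ℝ) - k) / k) * κ ⟨0, by omega⟩ := by
  set s : Multiset ℝ := Finset.univ.val.map κ
  have hcard : Multiset.card s = n := by simp [s]
  have hs : s ∈ Multiset.gammaCone k := by
    intro j hj
    rcases Nat.eq_zero_or_pos j with rfl | hj0
    · simp [Multiset.esymm_zero]
    · rw [Finset.esymm_map_val]
      exact hΓ j hj0 hj
  have hmax : ∀ x ∈ s, x ≤ κ ⟨0, by omega⟩ := by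
    simp only [s, Multiset.mem_map, Finset.mem_val, Finset.mem_univ, true_and,
      forall_exists_index, forall_apply_eq_imp_iff]
    exact fun i => hord _ i (Fin.le_def.2 (Nat.zero_le _))
  have hbound (j : Fin n) : κ j ≥ -(((n : ℝ) - k) / k) * κ ⟨0, by omega⟩ := by
    have h := Multiset.neg_mul_le_mul_of_mem_gammaCone hk hs hmax
      (Multiset.mem_map_of_mem κ (Finset.mem_univ j))
    rw [hcard] at h
    rw [ge_iff_le, neg_mul, div_mul_eq_mul_div, ← neg_div, div_le_iff₀ (by positivity)]
    linarith
  exact ⟨hbound _, hbound⟩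
end
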